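/- In the game G(m,n,γ) with integers m, n and integer discount factor γ > 1 with n ≥ 1, suppose there exists an integer k ≥ 2 with m·γ^{−k} > n. Then there exist rational thresholds t_0 > n and t_1 > 0 such that in the satisficing game in which Agent 0 has satisficing goal ⟨≥, t_0⟩ and Agent 1 has satisficing goal ⟨≥, t_1⟩, there is a pure Nash equilibrium whose primary trace moves from q1 to q3, loops at q3 exactly k−1 times, and then moves to q4, giving Agent 0 cumulative reward m·γ^{−k} > n and Agent 1 cumulative reward Σ_{j=1}^{k−1} γ^{−j} > 0; in particular both agents' satisficing goals are satisfied and both agents receive strictly more cumulative reward than in the unique Nash equilibrium outcome under maximization goals. -/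
import Mathlib


/-- The four states of the game `G(m,n,γ)` from the motivating example. -/
inductive St | q1 | q2 | q3 | q4
deriving DecidableEq

/-- The moves of `G(m,n,γ)`: `q1→q2`, `q1→q3`, `q2→q2`, `q3→q3`, `q3→q4`, `q4→q4`.
State `q1` is controlled by Agent 0; states `q2, q3, q4` by Agent 1. -/
def Edge : St → St → Prop
  | .q1, .q2 => True
  | .q1, .q3 => True
  | .q2, .q2 => True
  | .q3, .q3 => True
  | .q3, .q4 => True
  | .q4, .q4 => True
  | _, _ => False

/-- Agent 0's reward on each move: `n` on `q1→q2`, `m` on `q3→q4`, `0` otherwise. -/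
def rew0 (m n : ℤ) : St → St → ℤ
  | .q1, .q2 => n
  | .q3, .q4 => m
  | _, _ => 0

/-- Agent 1's reward on each move: `1` on `q3→q3`, `0` otherwise. -/
def rew1 : St → St → ℤ
  | .q3, .q3 => 1
  | _, _ => 0

/-- A strategy in the turn-based game: maps the finite history (list of previously
visited states) and the current state to a successor state. -/
def Strat : Type := List St → St → St

/-- A strategy is legal if it always chooses a successor along an edge of the game. -/
def Legal (s : Strat) : Prop := ∀ (h : List St) (v : St), Edge v (s h v)

/-- History and current state after `j` steps when Agent 0 follows `s0` (at `q1`) and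
Agent 1 follows `s1` (at `q2, q3, q4`), starting at the initial state `q1`. -/
def playAux (s0 s1 : Strat) : ℕ → List St × St
  | 0 => ([], St.q1)
  | j + 1 =>
      let p : List St × St := playAux s0 s1 j
      (p.1 ++ [p.2], if p.2 = St.q1 then s0 p.1 p.2 else s1 p.1 p.2)

/-- The primary trace of a strategy profile `(s0, s1)` (state at step `j`). -/
def play (s0 s1 : Strat) (j : ℕ) : St := (playAux s0 s1 j).2

/-- Cumulative discounted reward of Agent 0 on a play `ρ`. -/
noncomputable def cum0 (m n γ : ℤ) (ρ : ℕ → St) : ℝ :=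
  ∑' j : ℕ, (rew0 m n (ρ j) (ρ (j + 1)) : ℝ) / (γ : ℝ) ^ j

/-- Cumulative discounted reward of Agent 1 on a play `ρ`. -/
noncomputable def cum1 (γ : ℤ) (ρ : ℕ → St) : ℝ :=
  ∑' j : ℕ, (rew1 (ρ j) (ρ (j + 1)) : ℝ) / (γ : ℝ) ^ j

/-- Pure Nash equilibrium under maximization goals: both strategies are legal and no
agent has a legal unilateral deviation yielding strictly greater cumulative reward. -/
def MaxNE (m n γ : ℤ) (s0 s1 : Strat) : Prop :=
  Legal s0 ∧ Legal s1 ∧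
  (∀ s0' : Strat, Legal s0' → cum0 m n γ (play s0' s1) ≤ cum0 m n γ (play s0 s1)) ∧
  (∀ s1' : Strat, Legal s1' → cum1 γ (play s0 s1') ≤ cum1 γ (play s0 s1))

/-- Pure Nash equilibrium of the satisficing game in which Agent 0 has satisficing goal
`⟨≥, t0⟩` and Agent 1 has `⟨≥, t1⟩`: both strategies are legal and no agent has a legal
unilateral deviation yielding a play he strictly prefers (his goal holds on the deviant
trace but fails on the primary trace). -/
def SatNEG (m n γ : ℤ) (t0 t1 : ℚ) (s0 s1 : Strat) : Prop :=
  Legal s0 ∧ Legal s1 ∧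
  (∀ s0' : Strat, Legal s0' →
    ¬ ((t0 : ℝ) ≤ cum0 m n γ (play s0' s1) ∧ ¬ (t0 : ℝ) ≤ cum0 m n γ (play s0 s1))) ∧
  (∀ s1' : Strat, Legal s1' →
    ¬ ((t1 : ℝ) ≤ cum1 γ (play s0 s1') ∧ ¬ (t1 : ℝ) ≤ cum1 γ (play s0 s1)))

def s0x : Strat := fun _ v => match v with
  | .q1 => .q3 | .q2 => .q2 | .q3 => .q3 | .q4 => .q4

def s1x (k : ℕ) : Strat := fun h v => match v with
  | .q1 => .q3 | .q2 => .q2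
  | .q3 => if h.length < k then .q3 else .q4
  | .q4 => .q4

lemma legal_s0x : Legal s0x := by
  intro h v; cases v <;> simp only [s0x] <;> trivial

lemma legal_s1x (k : ℕ) : Legal (s1x k) := by
  intro h v; cases v <;> simp only [s1x] <;> (try split) <;> trivial

lemma playAux_len (s0 s1 : Strat) : ∀ j, (playAux s0 s1 j).1.length = j := by
  intro j; induction j with
  | zero => rfl
  | succ j ih => simp [playAux, ih]

lemma play_spec (k : ℕ) (hk : 2 ≤ k) :
    ∀ j, play s0x (s1x k) j = if j = 0 then St.q1 else if j ≤ k then St.q3 else St.q4 := by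
  intro j; induction j with
  | zero => rfl
  | succ j ih =>
    have hlen := playAux_len s0x (s1x k) j
    set p := playAux s0x (s1x k) j with hp
    have hstep : play s0x (s1x k) (j+1)
        = if p.2 = St.q1 then s0x p.1 p.2 else s1x k p.1 p.2 := rfl
    have hp2 : p.2 = play s0x (s1x k) j := rfl
    rw [hstep, hp2, ih]
    rcases Nat.eq_zero_or_pos j with rfl | hj
    · simp [s0x, show 1 ≤ k from by omega]
    · by_cases hjk : j ≤ k
      · by_cases hjk' : j + 1 ≤ k
        · simp [show ¬ j = 0 from by omega, hjk, s1x, hlen, show j < k from by omega, hjk']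
        · simp [show ¬ j = 0 from by omega, hjk, s1x, hlen, show ¬ j < k from by omega,
            show ¬ j + 1 ≤ k from by omega]
      · simp [show ¬ j = 0 from by omega, hjk, s1x, show ¬ j + 1 ≤ k from by omega]

lemma rew0_13 (m n : ℤ) : rew0 m n St.q1 St.q3 = 0 := rfl
lemma rew0_33 (m n : ℤ) : rew0 m n St.q3 St.q3 = 0 := rfl
lemma rew0_34 (m n : ℤ) : rew0 m n St.q3 St.q4 = m := rfl
lemma rew0_44 (m n : ℤ) : rew0 m n St.q4 St.q4 = 0 := rfl
lemma rew1_13 : rew1 St.q1 St.q3 = 0 := rfl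
lemma rew1_33 : rew1 St.q3 St.q3 = 1 := rfl
lemma rew1_34 : rew1 St.q3 St.q4 = 0 := rfl
lemma rew1_44 : rew1 St.q4 St.q4 = 0 := rfl
/-- In `G(m,n,γ)` with integer `γ > 1`, `n ≥ 1`, and an integer `k ≥ 2` with
`m·γ^{-k} > n`, there are rational thresholds `t0 > n` and `t1 > 0` such that the
satisficing game with goals `⟨≥, t0⟩` and `⟨≥, t1⟩` has a pure Nash equilibrium whose
primary trace moves from `q1` to `q3`, loops at `q3` exactly `k-1` times, and then moves
to `q4`, giving Agent 0 cumulative reward `m·γ^{-k} > n` and Agent 1 cumulative reward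
`Σ_{j=1}^{k-1} γ^{-j} > 0`; in particular both satisficing goals are satisfied and both
agents get strictly more cumulative reward than in the unique maximization NE outcome. -/
theorem satisficing_cooperation (m n γ : ℤ) (hγ : 1 < γ) (hn : 1 ≤ n)
    (k : ℕ) (hk : 2 ≤ k) (hmk : (n : ℝ) < (m : ℝ) / (γ : ℝ) ^ k) :
    ∃ t0 t1 : ℚ, (n : ℝ) < (t0 : ℝ) ∧ (0 : ℝ) < (t1 : ℝ) ∧
      ∃ s0 s1 : Strat, SatNEG m n γ t0 t1 s0 s1 ∧
        play s0 s1 0 = St.q1 ∧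
        (∀ j : ℕ, 1 ≤ j → j ≤ k → play s0 s1 j = St.q3) ∧
        (∀ j : ℕ, k + 1 ≤ j → play s0 s1 j = St.q4) ∧
        cum0 m n γ (play s0 s1) = (m : ℝ) / (γ : ℝ) ^ k ∧
        cum1 γ (play s0 s1) = ∑ j ∈ Finset.Icc 1 (k - 1), ((γ : ℝ) ^ j)⁻¹ ∧
        (t0 : ℝ) ≤ cum0 m n γ (play s0 s1) ∧
        (t1 : ℝ) ≤ cum1 γ (play s0 s1) ∧
        (n : ℝ) < cum0 m n γ (play s0 s1) ∧
        (0 : ℝ) < cum1 γ (play s0 s1) := by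
  have hγR : (1 : ℝ) < (γ : ℝ) := by exact_mod_cast hγ
  have hγ0 : (0 : ℝ) < (γ : ℝ) := by linarith
  have hspec := play_spec k hk
  set ρ := play s0x (s1x k) with hρ
  -- compute cum0
  have hc0 : cum0 m n γ ρ = (m : ℝ) / (γ : ℝ) ^ k := by
    unfold cum0
    have h1 : ∀ j : ℕ, j ≠ k →
        ((rew0 m n (ρ j) (ρ (j + 1)) : ℝ) / (γ : ℝ) ^ j) = 0 := by
      intro j hj
      rcases Nat.eq_zero_or_pos j with rfl | hjp
      · have h0 : ρ 0 = St.q1 := by rw [hspec]; simp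
        have h1' : ρ 1 = St.q3 := by rw [hspec]; simp; omega
        rw [h0, h1']; simp [rew0_13]
      · by_cases hjk : j + 1 ≤ k
        · have hA : ρ j = St.q3 := by rw [hspec]; simp [show ¬ j = 0 from by omega,
            show j ≤ k from by omega]
          have hB : ρ (j+1) = St.q3 := by rw [hspec]; simp [hjk]
          rw [hA, hB]; simp [rew0_33]
        · have hA : ρ j = St.q4 := by rw [hspec]; simp [show ¬ j = 0 from by omega,
            show ¬ j ≤ k from by omega]
          have hB : ρ (j+1) = St.q4 := by rw [hspec]; simp [show ¬ j + 1 ≤ k from by omega]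
          rw [hA, hB]; simp [rew0_44]
    rw [tsum_eq_single k h1]
    have hA : ρ k = St.q3 := by rw [hspec]; simp [show ¬ k = 0 from by omega]
    have hB : ρ (k+1) = St.q4 := by rw [hspec]; simp [show ¬ k + 1 ≤ k from by omega]
    rw [hA, hB]; simp [rew0_34]
  -- compute cum1
  have hc1 : cum1 γ ρ = ∑ j ∈ Finset.Icc 1 (k - 1), ((γ : ℝ) ^ j)⁻¹ := by
    unfold cum1
    have h1 : ∀ j : ℕ, j ∉ Finset.Icc 1 (k - 1) →
        ((rew1 (ρ j) (ρ (j + 1)) : ℝ) / (γ : ℝ) ^ j) = 0 := by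
      intro j hj
      simp only [Finset.mem_Icc, not_and_or, not_le] at hj
      rcases hj with hj | hj
      · have hj0 : j = 0 := by omega
        subst hj0
        have h0 : ρ 0 = St.q1 := by rw [hspec]; simp
        have h1' : ρ 1 = St.q3 := by rw [hspec]; simp; omega
        rw [h0, h1']; simp [rew1_13]
      · have hjk : k ≤ j := by omega
        by_cases hje : j = k
        · have hA : ρ j = St.q3 := by
            rw [hspec]; simp [show ¬ j = 0 from by omega, show j ≤ k from by omega]
          have hB : ρ (j+1) = St.q4 := by
            rw [hspec]; simp [show ¬ j + 1 ≤ k from by omega]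
          rw [hA, hB]; simp [rew1_34]
        · have hA : ρ j = St.q4 := by rw [hspec]; simp [show ¬ j = 0 from by omega,
            show ¬ j ≤ k from by omega]
          have hB : ρ (j+1) = St.q4 := by rw [hspec]; simp [show ¬ j + 1 ≤ k from by omega]
          rw [hA, hB]; simp [rew1_44]
    rw [tsum_eq_sum h1]
    apply Finset.sum_congr rfl
    intro j hj
    simp only [Finset.mem_Icc] at hj
    have hA : ρ j = St.q3 := by rw [hspec]; simp [show ¬ j = 0 from by omega,
      show j ≤ k from by omega]
    have hB : ρ (j+1) = St.q3 := by rw [hspec]; simp [show j + 1 ≤ k from by omega]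
    rw [hA, hB]; simp [rew1_33, one_div]
  have hc1pos : (0 : ℝ) < cum1 γ ρ := by
    rw [hc1]
    apply Finset.sum_pos
    · intro j hj; positivity
    · exact ⟨1, by simp only [Finset.mem_Icc]; omega⟩
  refine ⟨(m : ℚ) / (γ : ℚ) ^ k, (γ : ℚ)⁻¹, ?_, ?_, s0x, s1x k, ?_, ?_, ?_, ?_, hc0, hc1, ?_, ?_, ?_, hc1pos⟩
  · push_cast; exact hmk
  · push_cast; positivity
  · -- SatNEG
    refine ⟨legal_s0x, legal_s1x k, ?_, ?_⟩
    · intro s0' _ hcon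
      refine hcon.2 ?_
      rw [← hρ, hc0]; push_cast; exact le_refl _
    · intro s1' _ hcon
      refine hcon.2 ?_
      rw [← hρ, hc1]
      have : ((γ : ℝ))⁻¹ ≤ ∑ j ∈ Finset.Icc 1 (k - 1), ((γ : ℝ) ^ j)⁻¹ := by
        have h1 : (1:ℕ) ∈ Finset.Icc 1 (k-1) := by simp only [Finset.mem_Icc]; omega
        calc ((γ : ℝ))⁻¹ = ((γ : ℝ) ^ (1:ℕ))⁻¹ := by simp
          _ ≤ _ := Finset.single_le_sum (f := fun j => ((γ:ℝ)^j)⁻¹)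
              (fun j _ => by positivity) h1
      push_cast
      exact this
  · rw [play_spec k hk]; simp
  · intro j hj1 hj2; rw [play_spec k hk]; simp [show ¬ j = 0 from by omega, hj2]
  · intro j hj; rw [play_spec k hk]
    simp [show ¬ j = 0 from by omega, show ¬ j ≤ k from by omega]
  · rw [← hρ, hc0]; push_cast; exact le_refl _
  · rw [← hρ, hc1]
    push_cast
    have h1 : (1:ℕ) ∈ Finset.Icc 1 (k-1) := by simp only [Finset.mem_Icc]; omega
    calc ((γ : ℝ))⁻¹ = ((γ : ℝ) ^ (1:ℕ))⁻¹ := by simp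
      _ ≤ _ := Finset.single_le_sum (f := fun j => ((γ:ℝ)^j)⁻¹)
          (fun j _ => by positivity) h1
  · rw [← hρ, hc0]; exact hmk
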